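/- In dimension d = 2, for maximally entangled basis vectors Ψ^(1)_i and Ψ^(2)_j (elements of two maximally entangled bases), the maximum over all quantum channels Λ on the qubit of (1/2)⟨Ψ^(1)_i|(J_Λ/2)|Ψ^(1)_i⟩ + (1/2)⟨Ψ^(2)_j|(J_Λ/2)|Ψ^(2)_j⟩ equals (1/2)(1 + |⟨Ψ^(1)_i|Ψ^(2)_j⟩|), attained by a unitary channel. -/

import Mathlib

/-!
For unit vectors `Ψ₁, Ψ₂` the operator `|Ψ₁⟩⟨Ψ₁| + |Ψ₂⟩⟨Ψ₂|` is bounded by `1 + |⟨Ψ₁|Ψ₂⟩|`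
(Cauchy–Schwarz against the component of a vector in their span). Writing a positive
semidefinite `J` as `Bᴴ B` and summing this bound over the rows of `B` gives
`⟨Ψ₁|J|Ψ₁⟩ + ⟨Ψ₂|J|Ψ₂⟩ ≤ (1 + |⟨Ψ₁|Ψ₂⟩|) tr J`, and `tr J_Λ = 2` for a qubit channel.

Equality holds for the pure Choi state of `ρ ↦ W ρ Wᴴ` with `W ∝ U₁ + u U₂`, where the phase `u`
makes `u tr V ≥ 0` and `u² det V = 1` for `V = U₁ᴴ U₂`. Since `det V • Vᴴ = tr V • 1 - V` for a
2 × 2 unitary, `u V + ū Vᴴ = |tr V| • 1`, so `W` is unitary. A square root of `conj (det V)`,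
corrected by a sign, is such a phase.
-/

open Matrix Kronecker
open scoped ComplexOrder

/-- The inner product ⟨v|w⟩ (conjugate-linear in the first argument). -/
noncomputable def bra {n : Type*} [Fintype n] (v w : n → ℂ) : ℂ := star v ⬝ᵥ w

/-- The maximally entangled state |Ψ₊⟩ = (1/√d) Σ_i |i⟩⊗|i⟩. -/
noncomputable def maxEnt (d : ℕ) : Fin d × Fin d → ℂ :=
  fun p => if p.1 = p.2 then ((Real.sqrt d : ℂ))⁻¹ else 0

/-- The (unnormalized) Choi operator J_Λ = (I ⊗ Λ)(P'_+) of a linear map Λ. -/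
noncomputable def choi {n o : ℕ}
    (Λ : Matrix (Fin n) (Fin n) ℂ →ₗ[ℂ] Matrix (Fin o) (Fin o) ℂ) :
    Matrix (Fin n × Fin o) (Fin n × Fin o) ℂ :=
  Matrix.of fun p q => (Λ (Matrix.single p.1 q.1 1)) p.2 q.2

/-- A quantum channel: completely positive (positive semidefinite Choi operator)
and trace preserving. -/
noncomputable def IsChannel {n o : ℕ}
    (Λ : Matrix (Fin n) (Fin n) ℂ →ₗ[ℂ] Matrix (Fin o) (Fin o) ℂ) : Prop :=
  (choi Λ).PosSemidef ∧ ∀ A, (Λ A).trace = A.trace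

section InnerProductSpace

variable {𝕜 E : Type*} [RCLike 𝕜] [NormedAddCommGroup E] [InnerProductSpace 𝕜 E]

open RCLike in
theorem norm_inner_sq_add_norm_inner_sq_le {e₁ e₂ : E} (h₁ : ‖e₁‖ = 1) (h₂ : ‖e₂‖ = 1) (x : E) :
    ‖inner 𝕜 e₁ x‖ ^ 2 + ‖inner 𝕜 e₂ x‖ ^ 2 ≤ (1 + ‖inner 𝕜 e₁ e₂‖) * ‖x‖ ^ 2 := by
  set a := inner 𝕜 e₁ x
  set b := inner 𝕜 e₂ x
  set c := inner 𝕜 e₁ e₂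
  set Q := ‖a‖ ^ 2 + ‖b‖ ^ 2
  set w := a • e₁ + b • e₂
  have hQ : Q ≤ ‖w‖ * ‖x‖ := by
    have : inner 𝕜 w x = (Q : 𝕜) := by
      change inner 𝕜 (a • e₁ + b • e₂) x = _
      rw [inner_add_left, inner_smul_left, inner_smul_left, RCLike.conj_mul, RCLike.conj_mul]
      simp only [Q]; push_cast; rfl
    simpa [this] using re_inner_le_norm (𝕜 := 𝕜) w x
  have hw : ‖w‖ ^ 2 ≤ (1 + ‖c‖) * Q := by
    have hcross : re (inner 𝕜 (a • e₁) (b • e₂)) ≤ ‖a‖ * ‖b‖ * ‖c‖ := by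
      rw [inner_smul_left, inner_smul_right]
      refine (re_le_norm _).trans_eq ?_
      simp only [norm_mul, norm_conj, c]; ring
    have := norm_add_sq (𝕜 := 𝕜) (a • e₁) (b • e₂)
    rw [norm_smul, norm_smul, h₁, h₂] at this
    nlinarith [sq_nonneg (‖a‖ - ‖b‖), norm_nonneg c]
  rcases (show 0 ≤ Q by positivity).eq_or_lt with hQ0 | hQ0
  · rw [← hQ0]; positivity
  · nlinarith [norm_nonneg w, norm_nonneg x, mul_self_nonneg (‖w‖ * ‖x‖)]

end InnerProductSpace

section bra

variable {m : Type*} [Fintype m]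

theorem bra_eq_inner (v w : m → ℂ) : bra v w = inner ℂ (WithLp.toLp 2 v) (WithLp.toLp 2 w) :=
  dotProduct_comm _ _

theorem re_bra_self (v : m → ℂ) : (bra v v).re = ‖WithLp.toLp 2 v‖ ^ 2 := by
  rw [bra_eq_inner]; exact inner_self_eq_norm_sq (𝕜 := ℂ) _

theorem norm_toLp_eq_one_of_bra_self {v : m → ℂ} (h : bra v v = 1) : ‖WithLp.toLp 2 v‖ = 1 := by
  have := re_bra_self v
  rw [h, Complex.one_re] at this
  nlinarith [norm_nonneg (WithLp.toLp 2 v)]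

theorem star_bra (v w : m → ℂ) : star (bra v w) = bra w v := (star_dotProduct w v).symm

theorem bra_smul_smul (a b : ℂ) (v w : m → ℂ) : bra (a • v) (b • w) = star a * b * bra v w := by
  simp only [bra, star_smul, smul_dotProduct, dotProduct_smul, smul_eq_mul]; ring

theorem re_bra_vecMulVec_mulVec (v Ψ : m → ℂ) :
    (bra Ψ (vecMulVec v (star v) *ᵥ Ψ)).re = ‖bra Ψ v‖ ^ 2 := by
  have : vecMulVec v (star v) *ᵥ Ψ = bra v Ψ • v := by
    rw [vecMulVec_mulVec]; ext; simp [bra, mul_comm]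
  rw [this, bra, dotProduct_smul, ← bra, ← star_bra Ψ v, smul_eq_mul, Complex.star_def,
    Complex.conj_mul']
  norm_cast

theorem re_bra_conjTranspose_mul_self_mulVec (B : Matrix m m ℂ) (v : m → ℂ) :
    (bra v ((Bᴴ * B) *ᵥ v)).re =
      ∑ k, ‖inner ℂ (WithLp.toLp 2 (star (B k))) (WithLp.toLp 2 v)‖ ^ 2 := by
  have : bra v ((Bᴴ * B) *ᵥ v) = bra (B *ᵥ v) (B *ᵥ v) := by
    rw [bra, bra, ← mulVec_mulVec, dotProduct_mulVec, star_mulVec]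
  rw [this, re_bra_self, EuclideanSpace.norm_sq_eq]
  refine Finset.sum_congr rfl fun k _ => ?_
  rw [← bra_eq_inner, bra, star_star]
  rfl

theorem re_trace_conjTranspose_mul_self (B : Matrix m m ℂ) :
    (Bᴴ * B).trace.re = ∑ k, ‖WithLp.toLp 2 (star (B k))‖ ^ 2 := by
  simp_rw [← re_bra_self, ← Complex.re_sum, bra, star_star]
  rw [trace_mul_comm]
  rfl

theorem re_bra_mulVec_add_re_bra_mulVec_le {J : Matrix m m ℂ} (hJ : J.PosSemidef)
    {Ψ₁ Ψ₂ : m → ℂ} (h₁ : bra Ψ₁ Ψ₁ = 1) (h₂ : bra Ψ₂ Ψ₂ = 1) :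
    (bra Ψ₁ (J *ᵥ Ψ₁)).re + (bra Ψ₂ (J *ᵥ Ψ₂)).re ≤ (1 + ‖bra Ψ₁ Ψ₂‖) * J.trace.re := by
  obtain ⟨B, rfl⟩ : ∃ B : Matrix m m ℂ, J = Bᴴ * B := by
    classical
    open MatrixOrder in exact CStarAlgebra.nonneg_iff_eq_star_mul_self.mp hJ.nonneg
  rw [re_bra_conjTranspose_mul_self_mulVec, re_bra_conjTranspose_mul_self_mulVec,
    re_trace_conjTranspose_mul_self, ← Finset.sum_add_distrib, Finset.mul_sum, bra_eq_inner]
  gcongr with k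
  rw [norm_inner_symm (WithLp.toLp 2 (star (B k))), norm_inner_symm (WithLp.toLp 2 (star (B k)))]
  exact norm_inner_sq_add_norm_inner_sq_le (norm_toLp_eq_one_of_bra_self h₁)
    (norm_toLp_eq_one_of_bra_self h₂) _

end bra

theorem star_inv_sqrt_mul_inv_sqrt {r : ℝ} (hr : 0 ≤ r) :
    star ((√r : ℝ) : ℂ)⁻¹ * ((√r : ℝ) : ℂ)⁻¹ = (r : ℂ)⁻¹ := by
  rw [← Complex.ofReal_inv, Complex.star_def, Complex.conj_ofReal, ← Complex.ofReal_mul, ← mul_inv,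
    Real.mul_self_sqrt hr, Complex.ofReal_inv]

theorem Complex.norm_eq_one_of_star_mul_self {z : ℂ} (h : star z * z = 1) : ‖z‖ = 1 := by
  have := congrArg norm h
  rw [norm_mul, norm_star, norm_one, mul_self_eq_one_iff] at this
  exact this.resolve_right (by linarith [norm_nonneg z])

section Choi

theorem maxEnt_eq_smul_vec_one (n : ℕ) :
    maxEnt n = ((√n : ℝ) : ℂ)⁻¹ • vec (1 : Matrix (Fin n) (Fin n) ℂ) := by
  ext ⟨i, j⟩
  simp [maxEnt, vec, one_apply, eq_comm]

variable {n o : ℕ}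

theorem one_kronecker_mulVec_maxEnt (A : Matrix (Fin o) (Fin n) ℂ) :
    ((1 : Matrix (Fin n) (Fin n) ℂ) ⊗ₖ A) *ᵥ maxEnt n = ((√n : ℝ) : ℂ)⁻¹ • vec A := by
  rw [maxEnt_eq_smul_vec_one, mulVec_smul, ← vec_mul_eq_mulVec, Matrix.mul_one]

theorem bra_one_kronecker_mulVec_maxEnt (A B : Matrix (Fin o) (Fin n) ℂ) :
    bra (((1 : Matrix (Fin n) (Fin n) ℂ) ⊗ₖ A) *ᵥ maxEnt n)
      (((1 : Matrix (Fin n) (Fin n) ℂ) ⊗ₖ B) *ᵥ maxEnt n) = (Aᴴ * B).trace / n := by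
  rw [one_kronecker_mulVec_maxEnt, one_kronecker_mulVec_maxEnt, bra_smul_smul, bra,
    star_vec_dotProduct_vec, star_inv_sqrt_mul_inv_sqrt n.cast_nonneg, Complex.ofReal_natCast,
    inv_mul_eq_div]

theorem bra_one_kronecker_mulVec_maxEnt_self [NeZero n] {U : Matrix (Fin o) (Fin n) ℂ}
    (hU : Uᴴ * U = 1) :
    bra (((1 : Matrix (Fin n) (Fin n) ℂ) ⊗ₖ U) *ᵥ maxEnt n)
      (((1 : Matrix (Fin n) (Fin n) ℂ) ⊗ₖ U) *ᵥ maxEnt n) = 1 := by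
  rw [bra_one_kronecker_mulVec_maxEnt, hU, trace_one, Fintype.card_fin,
    div_self (Nat.cast_ne_zero.mpr (NeZero.ne n))]

theorem trace_choi {Λ : Matrix (Fin n) (Fin n) ℂ →ₗ[ℂ] Matrix (Fin o) (Fin o) ℂ}
    (hΛ : ∀ A, (Λ A).trace = A.trace) : (choi Λ).trace = n := by
  have hdiag (i : Fin n) : ∑ k, Λ (single i i 1) k k = 1 := by
    simpa [trace] using hΛ (single i i 1)
  simp [trace, choi, Fintype.sum_prod_type, hdiag]

theorem IsChannel.re_bra_choi_mulVec_add_le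
    {Λ : Matrix (Fin n) (Fin n) ℂ →ₗ[ℂ] Matrix (Fin o) (Fin o) ℂ} (hΛ : IsChannel Λ)
    {Ψ₁ Ψ₂ : Fin n × Fin o → ℂ} (h₁ : bra Ψ₁ Ψ₁ = 1) (h₂ : bra Ψ₂ Ψ₂ = 1) :
    (bra Ψ₁ (choi Λ *ᵥ Ψ₁)).re + (bra Ψ₂ (choi Λ *ᵥ Ψ₂)).re ≤ (1 + ‖bra Ψ₁ Ψ₂‖) * n := by
  simpa [trace_choi hΛ.2] using re_bra_mulVec_add_re_bra_mulVec_le hΛ.1 h₁ h₂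

def conjChannel (W : Matrix (Fin o) (Fin n) ℂ) :
    Matrix (Fin n) (Fin n) ℂ →ₗ[ℂ] Matrix (Fin o) (Fin o) ℂ :=
  (mulRightLinearMap (Fin o) ℂ Wᴴ).comp (mulLeftLinearMap (Fin n) ℂ W)

theorem conjChannel_apply (W : Matrix (Fin o) (Fin n) ℂ) (A : Matrix (Fin n) (Fin n) ℂ) :
    conjChannel W A = W * A * Wᴴ := rfl

theorem choi_conjChannel (W : Matrix (Fin o) (Fin n) ℂ) :
    choi (conjChannel W) = vecMulVec (vec W) (star (vec W)) := by
  ext p q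
  simp [choi, conjChannel_apply, mul_apply, single_apply, vecMulVec_apply, ite_and]

theorem isChannel_conjChannel {W : Matrix (Fin o) (Fin n) ℂ} (hW : Wᴴ * W = 1) :
    IsChannel (conjChannel W) := by
  refine ⟨choi_conjChannel W ▸ posSemidef_vecMulVec_self_star _, fun A => ?_⟩
  rw [conjChannel_apply, trace_mul_cycle, hW, Matrix.one_mul]

theorem inv_natCast_smul_choi_conjChannel (W : Matrix (Fin o) (Fin n) ℂ) :
    (n : ℂ)⁻¹ • choi (conjChannel W) =
      vecMulVec (((1 : Matrix (Fin n) (Fin n) ℂ) ⊗ₖ W) *ᵥ maxEnt n)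
        (star (((1 : Matrix (Fin n) (Fin n) ℂ) ⊗ₖ W) *ᵥ maxEnt n)) := by
  rw [choi_conjChannel, one_kronecker_mulVec_maxEnt, star_smul, smul_vecMulVec, vecMulVec_smul,
    smul_smul, mul_comm, star_inv_sqrt_mul_inv_sqrt n.cast_nonneg, Complex.ofReal_natCast]

end Choi

namespace Matrix

theorem adjugate_fin_two_eq_trace_smul_one_sub {R : Type*} [CommRing R]
    (A : Matrix (Fin 2) (Fin 2) R) : adjugate A = A.trace • 1 - A := by
  ext i j
  fin_cases i <;> fin_cases j <;> simp [adjugate_fin_two, trace_fin_two]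

section FinTwo

variable {R : Type*} [CommRing R] [StarRing R] {V : Matrix (Fin 2) (Fin 2) R}

theorem det_smul_conjTranspose_fin_two (hV : V ∈ unitaryGroup (Fin 2) R) :
    V.det • Vᴴ = V.trace • 1 - V := by
  rw [← adjugate_fin_two_eq_trace_smul_one_sub, ← Matrix.mul_one (adjugate V),
    ← mem_unitaryGroup_iff.mp hV, ← Matrix.mul_assoc, adjugate_mul, smul_mul, Matrix.one_mul,
    star_eq_conjTranspose]

theorem smul_add_star_smul_conjTranspose_fin_two (hV : V ∈ unitaryGroup (Fin 2) R) {u : R}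
    (hu : star u = u * V.det) : u • V + star u • Vᴴ = (u * V.trace) • 1 := by
  rw [hu, mul_smul, det_smul_conjTranspose_fin_two hV, smul_sub, smul_smul]
  abel

end FinTwo

theorem exists_star_eq_mul_det_and_mul_trace_eq_norm {V : Matrix (Fin 2) (Fin 2) ℂ}
    (hV : V ∈ unitaryGroup (Fin 2) ℂ) :
    ∃ u : ℂ, star u * u = 1 ∧ star u = u * V.det ∧ u * V.trace = ‖V.trace‖ := by
  have hdet : star V.det * V.det = 1 := Unitary.star_mul_self_of_mem (det_of_mem_unitary hV)
  have htr : V.det * star V.trace = V.trace := by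
    have := congrArg trace (det_smul_conjTranspose_fin_two hV)
    simp only [trace_smul, trace_sub, trace_conjTranspose, trace_one, Fintype.card_fin,
      smul_eq_mul] at this
    linear_combination this
  obtain ⟨u, hu⟩ := IsAlgClosed.exists_pow_nat_eq (star V.det) two_pos
  have hnorm : star u * u = 1 := by
    have : ‖u‖ ^ 2 = 1 := by
      rw [← norm_pow, hu, norm_star, Complex.norm_eq_one_of_star_mul_self hdet]
    rw [Complex.star_def, Complex.conj_mul']
    exact_mod_cast this
  have hstar : star u = u * V.det := by
    linear_combination (-star u) * hdet - star u * V.det * hu + u * V.det * hnorm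
  have hsq : (u * V.trace) ^ 2 = (‖V.trace‖ : ℂ) ^ 2 := by
    rw [← Complex.mul_conj']
    change _ = V.trace * star V.trace
    linear_combination V.trace ^ 2 * hu - star V.det * V.trace * htr + V.trace * star V.trace * hdet
  rcases sq_eq_sq_iff_eq_or_eq_neg.mp hsq with h | h
  · exact ⟨u, hnorm, hstar, h⟩
  · exact ⟨-u, by simpa using hnorm, by simpa using hstar,
      by simpa [neg_mul] using congrArg Neg.neg h⟩

theorem inv_sqrt_smul_mem_unitaryGroup {n : Type*} [Fintype n] [DecidableEq n]
    {A : Matrix n n ℂ} {r : ℝ} (hr : 0 < r) (h : Aᴴ * A = (r : ℂ) • 1) :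
    ((√r : ℝ) : ℂ)⁻¹ • A ∈ unitaryGroup n ℂ := by
  rw [mem_unitaryGroup_iff', star_eq_conjTranspose, conjTranspose_smul, Matrix.smul_mul,
    Matrix.mul_smul, h, smul_smul, smul_smul, star_inv_sqrt_mul_inv_sqrt hr.le,
    inv_mul_cancel₀ (Complex.ofReal_ne_zero.mpr hr.ne'), one_smul]

theorem conjTranspose_add_smul_mul_add_smul {n : Type*} [Fintype n] [DecidableEq n]
    {U₁ U₂ : Matrix n n ℂ} (h₁ : U₁ᴴ * U₁ = 1) (h₂ : U₂ᴴ * U₂ = 1) {u : ℂ} (hu : star u * u = 1) :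
    (U₁ + u • U₂)ᴴ * (U₁ + u • U₂) = (2 : ℂ) • 1 + (u • (U₁ᴴ * U₂) + star u • (U₁ᴴ * U₂)ᴴ) := by
  simp only [conjTranspose_add, conjTranspose_smul, add_mul, mul_add, Matrix.smul_mul,
    Matrix.mul_smul, h₁, h₂, conjTranspose_mul, conjTranspose_conjTranspose, smul_smul,
    mul_comm u (star u), hu]
  module

theorem exists_mem_unitaryGroup_norm_trace_sq_eq {U₁ U₂ : Matrix (Fin 2) (Fin 2) ℂ}
    (hU₁ : U₁ ∈ unitaryGroup (Fin 2) ℂ) (hU₂ : U₂ ∈ unitaryGroup (Fin 2) ℂ) :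
    ∃ W ∈ unitaryGroup (Fin 2) ℂ, ‖(U₁ᴴ * W).trace‖ ^ 2 = 2 + ‖(U₁ᴴ * U₂).trace‖ ∧
      ‖(U₂ᴴ * W).trace‖ ^ 2 = 2 + ‖(U₁ᴴ * U₂).trace‖ := by
  have h₁ : U₁ᴴ * U₁ = 1 := mem_unitaryGroup_iff'.mp hU₁
  have h₂ : U₂ᴴ * U₂ = 1 := mem_unitaryGroup_iff'.mp hU₂
  set V := U₁ᴴ * U₂ with hVdef
  have hV : V ∈ unitaryGroup (Fin 2) ℂ := mul_mem (Unitary.star_mem hU₁) hU₂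
  obtain ⟨u, hu, hstar, htr⟩ := exists_star_eq_mul_det_and_mul_trace_eq_norm hV
  set s := ‖V.trace‖
  have hs : 0 < 2 + s := by positivity
  have hV' : U₂ᴴ * U₁ = Vᴴ := by rw [hVdef, conjTranspose_mul, conjTranspose_conjTranspose]
  have hA : (U₁ + u • U₂)ᴴ * (U₁ + u • U₂) = ((2 + s : ℝ) : ℂ) • 1 := by
    rw [conjTranspose_add_smul_mul_add_smul h₁ h₂ hu, ← hVdef,
      smul_add_star_smul_conjTranspose_fin_two hV hstar, htr, ← add_smul]
    push_cast; rfl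
  have htr₁ : (U₁ᴴ * (U₁ + u • U₂)).trace = 1 * (2 + s) := by
    rw [Matrix.mul_add, Matrix.mul_smul, trace_add, trace_smul, h₁, ← hVdef, trace_one,
      Fintype.card_fin, smul_eq_mul, htr]
    push_cast; ring
  have htr₂ : (U₂ᴴ * (U₁ + u • U₂)).trace = u * (2 + s) := by
    have hstar_tr : star V.trace = u * s := by
      have := congrArg star htr
      rw [star_mul', show star (s : ℂ) = s from Complex.conj_ofReal s] at this
      linear_combination u * this - star V.trace * hu
    rw [Matrix.mul_add, Matrix.mul_smul, trace_add, trace_smul, h₂, hV', trace_conjTranspose,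
      trace_one, Fintype.card_fin, smul_eq_mul, hstar_tr]
    push_cast; ring
  have hnorm (z : ℂ) (hz : ‖z‖ = 1) : ‖((√(2 + s) : ℝ) : ℂ)⁻¹ * (z * (2 + s))‖ ^ 2 = 2 + s := by
    rw [norm_mul, norm_mul, hz, norm_inv, Complex.norm_real,
      Real.norm_of_nonneg (Real.sqrt_nonneg _),
      ← Complex.ofReal_ofNat, ← Complex.ofReal_add, Complex.norm_real, Real.norm_of_nonneg hs.le]
    field_simp
    rw [Real.sq_sqrt hs.le]
  refine ⟨_, inv_sqrt_smul_mem_unitaryGroup hs hA, ?_, ?_⟩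
  · rw [Matrix.mul_smul, trace_smul, smul_eq_mul, htr₁, hnorm 1 norm_one]
  · rw [Matrix.mul_smul, trace_smul, smul_eq_mul, htr₂,
      hnorm u (Complex.norm_eq_one_of_star_mul_self hu)]

end Matrix

/-- In dimension 2, for maximally entangled basis vectors
Ψ^(1) = (I⊗U₁)|Ψ₊⟩ and Ψ^(2) = (I⊗U₂)|Ψ₊⟩, the maximum over all qubit channels Λ of
(1/2)⟨Ψ^(1)|(J_Λ/2)|Ψ^(1)⟩ + (1/2)⟨Ψ^(2)|(J_Λ/2)|Ψ^(2)⟩ equals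
(1/2)(1 + |⟨Ψ^(1)|Ψ^(2)⟩|), and it is attained by a unitary channel. -/
theorem stmt18 (U₁ U₂ : Matrix (Fin 2) (Fin 2) ℂ)
    (hU₁ : U₁ ∈ Matrix.unitaryGroup (Fin 2) ℂ)
    (hU₂ : U₂ ∈ Matrix.unitaryGroup (Fin 2) ℂ)
    (Ψ₁ Ψ₂ : Fin 2 × Fin 2 → ℂ)
    (hΨ₁ : Ψ₁ = ((1 : Matrix (Fin 2) (Fin 2) ℂ) ⊗ₖ U₁).mulVec (maxEnt 2))
    (hΨ₂ : Ψ₂ = ((1 : Matrix (Fin 2) (Fin 2) ℂ) ⊗ₖ U₂).mulVec (maxEnt 2)) :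
    IsGreatest
      {t : ℝ | ∃ Λ : Matrix (Fin 2) (Fin 2) ℂ →ₗ[ℂ] Matrix (Fin 2) (Fin 2) ℂ,
        IsChannel Λ ∧
        t = (1 / 2) * (bra Ψ₁ (((2 : ℂ)⁻¹ • choi Λ).mulVec Ψ₁)).re
          + (1 / 2) * (bra Ψ₂ (((2 : ℂ)⁻¹ • choi Λ).mulVec Ψ₂)).re}
      ((1 / 2) * (1 + ‖bra Ψ₁ Ψ₂‖)) ∧
    ∃ Λ : Matrix (Fin 2) (Fin 2) ℂ →ₗ[ℂ] Matrix (Fin 2) (Fin 2) ℂ,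
      IsChannel Λ ∧
      (∃ W ∈ Matrix.unitaryGroup (Fin 2) ℂ, ∀ A, Λ A = W * A * Wᴴ) ∧
      (1 / 2) * (bra Ψ₁ (((2 : ℂ)⁻¹ • choi Λ).mulVec Ψ₁)).re
        + (1 / 2) * (bra Ψ₂ (((2 : ℂ)⁻¹ • choi Λ).mulVec Ψ₂)).re
      = (1 / 2) * (1 + ‖bra Ψ₁ Ψ₂‖) := by
  have hn₁ : bra Ψ₁ Ψ₁ = 1 :=
    hΨ₁ ▸ bra_one_kronecker_mulVec_maxEnt_self (mem_unitaryGroup_iff'.mp hU₁)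
  have hn₂ : bra Ψ₂ Ψ₂ = 1 :=
    hΨ₂ ▸ bra_one_kronecker_mulVec_maxEnt_self (mem_unitaryGroup_iff'.mp hU₂)
  have hscale (J : Matrix (Fin 2 × Fin 2) (Fin 2 × Fin 2) ℂ) (Ψ : Fin 2 × Fin 2 → ℂ) :
      (bra Ψ (((2 : ℂ)⁻¹ • J) *ᵥ Ψ)).re = (bra Ψ (J *ᵥ Ψ)).re / 2 := by
    simp [bra, smul_mulVec, dotProduct_smul, div_eq_inv_mul]
  obtain ⟨W, hW, hW₁, hW₂⟩ := exists_mem_unitaryGroup_norm_trace_sq_eq hU₁ hU₂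
  have hΛW := isChannel_conjChannel (mem_unitaryGroup_iff'.mp hW)
  have hvalue : (1 / 2) * (bra Ψ₁ (((2 : ℂ)⁻¹ • choi (conjChannel W)) *ᵥ Ψ₁)).re
      + (1 / 2) * (bra Ψ₂ (((2 : ℂ)⁻¹ • choi (conjChannel W)) *ᵥ Ψ₂)).re
      = (1 / 2) * (1 + ‖bra Ψ₁ Ψ₂‖) := by
    have hstate := inv_natCast_smul_choi_conjChannel (n := 2) W
    rw [Nat.cast_ofNat] at hstate
    rw [hstate, re_bra_vecMulVec_mulVec, re_bra_vecMulVec_mulVec, hΨ₁, hΨ₂,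
      bra_one_kronecker_mulVec_maxEnt, bra_one_kronecker_mulVec_maxEnt,
      bra_one_kronecker_mulVec_maxEnt, norm_div, norm_div, norm_div, div_pow, div_pow, hW₁, hW₂]
    simp only [Nat.cast_ofNat, Complex.norm_ofNat]
    ring
  refine ⟨⟨⟨_, hΛW, hvalue.symm⟩, ?_⟩, _, hΛW, ⟨W, hW, conjChannel_apply W⟩, hvalue⟩
  rintro _ ⟨Λ, hΛ, rfl⟩
  have := hΛ.re_bra_choi_mulVec_add_le hn₁ hn₂
  rw [hscale, hscale]
  push_cast at this
  linarith
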